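/- arXiv:2405.20355 — 3 statements merged into one kernel-verified Lean document; each statement's English description precedes it below -/
import Mathlib

section
/- Let m be a positive natural number, let μ be the uniform probability measure on the cube [-1,1]^m in ℝ^m, let f : ℝ^m → ℝ be continuous and (Fréchet) differentiable at a point x ∈ ℝ^m with gradient g = ∇f(x). Define the random vulnerability ρ_rand(ε) = ∫ (f(x + ε·δ) - f(x))^2 dμ(δ). Then ρ_rand(ε)/ε^2 tends to (1/3)·‖g‖_2^2 as ε → 0 from the right. -/
/-!
Dominated convergence: differentiability at `x` makes `|f (x + ε • δ) - f x| ≤ C |ε|` uniformly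
on the unit `ℓ∞` ball for small `ε`, while `(f (x + ε • δ) - f x) / ε → L δ` pointwise, so the
normalized vulnerability tends to `∫ (L δ)² dμ`. Under `μ` the coordinates are independent, centred
and uniform on `[-1, 1]`, hence of variance `1/3`, so this second moment is `(1/3) ∑ gᵢ²`.
-/

open MeasureTheory Filter ProbabilityTheory Set Topology
open scoped ENNReal

theorem MeasureTheory.Measure.pi_cond {ι : Type*} [Fintype ι] {α : ι → Type*}
    [∀ i, MeasurableSpace (α i)] (μ : ∀ i, Measure (α i)) [∀ i, SigmaFinite (μ i)] {s : ∀ i, Set (α i)}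
    (hs : ∀ i, MeasurableSet (s i)) (hs₀ : ∀ i, μ i (s i) ≠ 0) (hs_top : ∀ i, μ i (s i) ≠ ∞) :
    Measure.pi (fun i => (μ i)[|s i]) = (Measure.pi μ)[|univ.pi s] := by
  have := fun i => cond_isProbabilityMeasure_of_finite (hs₀ i) (hs_top i)
  refine Measure.pi_eq fun t _ => ?_
  rw [cond_apply (.univ_pi hs), ← pi_inter_distrib, Measure.pi_pi, Measure.pi_pi,
    ENNReal.prod_inv_distrib fun i _ j _ _ => .inr (hs_top j), ← Finset.prod_mul_distrib]
  exact Finset.prod_congr rfl fun i _ => (cond_apply (hs i) _ _).symm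

theorem integral_cond_Icc {a b : ℝ} (hab : a ≤ b) (f : ℝ → ℝ) :
    ∫ t, f t ∂volume[|Icc a b] = (b - a)⁻¹ * ∫ t in a..b, f t := by
  rw [ProbabilityTheory.cond, integral_smul_measure, intervalIntegral.integral_of_le hab,
    integral_Icc_eq_integral_Ioc, Real.volume_Icc, ENNReal.toReal_inv,
    ENNReal.toReal_ofReal (sub_nonneg.mpr hab), smul_eq_mul]

instance : IsProbabilityMeasure (volume[|Icc (-1 : ℝ) 1]) :=
  cond_isProbabilityMeasure_of_finite (by simp) (by simp)

theorem memLp_id_cond_Icc_neg_one_one (p : ℝ≥0∞) : MemLp id p volume[|Icc (-1 : ℝ) 1] := by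
  refine .of_bound aestronglyMeasurable_id 1 ?_
  filter_upwards [ae_cond_mem measurableSet_Icc] with t ht
  exact abs_le.2 ht

theorem integral_id_cond_Icc_neg_one_one : ∫ t, t ∂volume[|Icc (-1 : ℝ) 1] = 0 := by
  simp [integral_cond_Icc (by norm_num : (-1 : ℝ) ≤ 1)]

theorem integral_sq_cond_Icc_neg_one_one : ∫ t, t ^ 2 ∂volume[|Icc (-1 : ℝ) 1] = 1 / 3 := by
  rw [integral_cond_Icc (by norm_num), integral_pow]
  norm_num

theorem smul_restrict_cube_eq_cond (ι : Type*) [Fintype ι] :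
    ((2 : ℝ≥0∞) ^ Fintype.card ι)⁻¹ • volume.restrict {δ : ι → ℝ | ∀ i, -1 ≤ δ i ∧ δ i ≤ 1} =
      volume[|univ.pi fun _ : ι => Icc (-1 : ℝ) 1] := by
  have hcube : {δ : ι → ℝ | ∀ i, -1 ≤ δ i ∧ δ i ≤ 1} = univ.pi fun _ => Icc (-1) 1 := by
    ext δ; simp only [Set.mem_pi, mem_univ, mem_Icc, true_implies]; rfl
  rw [hcube, ProbabilityTheory.cond, volume_pi_pi]
  norm_num

theorem cond_cube_eq_pi (ι : Type*) [Fintype ι] :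
    volume[|univ.pi fun _ : ι => Icc (-1 : ℝ) 1] = Measure.pi fun _ => volume[|Icc (-1 : ℝ) 1] := by
  rw [Measure.pi_cond _ (fun _ => measurableSet_Icc) (by simp) (by simp), volume_pi]

theorem integral_sum_mul_sq_pi {ι : Type*} [Fintype ι] (ν : Measure ℝ) [IsProbabilityMeasure ν]
    (hν₂ : MemLp id 2 ν) (hν₁ : ∫ t, t ∂ν = 0) (g : ι → ℝ) :
    ∫ δ, (∑ i, g i * δ i) ^ 2 ∂Measure.pi (fun _ => ν) = (∑ i, g i ^ 2) * ∫ t, t ^ 2 ∂ν := by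
  set X : ι → (ι → ℝ) → ℝ := fun i δ => g i * δ i with hX
  have hX₂ : ∀ i, MemLp (X i) 2 (Measure.pi fun _ => ν) := fun i =>
    (hν₂.comp_measurePreserving (measurePreserving_eval _ i)).const_mul (g i)
  have hindep : ∀ i j, i ≠ j → X i ⟂ᵢ[Measure.pi fun _ => ν] X j := fun i j hij =>
    ((iIndepFun_pi (X := fun _ => id) fun _ => aemeasurable_id).indepFun hij).comp
      (measurable_const_mul (g i)) (measurable_const_mul (g j))
  have hmean : ∫ δ, ∑ i, X i δ ∂Measure.pi (fun _ => ν) = 0 := by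
    rw [integral_finsetSum _ fun i _ => (hX₂ i).integrable one_le_two]
    simp [hX, integral_const_mul, integral_eval, hν₁]
  have hvar : ∀ i, Var[X i; Measure.pi fun _ => ν] = g i ^ 2 * ∫ t, t ^ 2 ∂ν := fun i => by
    have hcoord : Var[fun δ => δ i; Measure.pi fun _ => ν] = Var[fun t => t; ν] :=
      (measurePreserving_eval (fun _ : ι => ν) i).variance_fun_comp aemeasurable_id'
    rw [hX, variance_const_mul, hcoord, variance_of_integral_eq_zero aemeasurable_id' hν₁]
  calc ∫ δ, (∑ i, g i * δ i) ^ 2 ∂Measure.pi (fun _ => ν)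
        = Var[∑ i, X i; Measure.pi fun _ => ν] := by
        rw [variance_of_integral_eq_zero (by fun_prop) (by simpa using hmean)]
        simp [hX]
    _ = ∑ i, Var[X i; Measure.pi fun _ => ν] :=
        IndepFun.variance_sum (fun i _ => hX₂ i) fun i _ j _ => hindep i j
    _ = (∑ i, g i ^ 2) * ∫ t, t ^ 2 ∂ν := by simp only [hvar, Finset.sum_mul]

namespace HasFDerivAt

variable {E : Type*} [NormedAddCommGroup E] [NormedSpace ℝ E]
  {f : E → ℝ} {L : E →L[ℝ] ℝ} {x : E}

theorem tendsto_sq_sub_div_sq (hf : HasFDerivAt f L x) (δ : E) :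
    Tendsto (fun ε : ℝ => (f (x + ε • δ) - f x) ^ 2 / ε ^ 2) (𝓝[≠] 0) (𝓝 (L δ ^ 2)) := by
  have hline : HasDerivAt (fun ε : ℝ => f (x + ε • δ)) (L δ) 0 := by
    have := ((hasDerivAt_id (0 : ℝ)).smul_const δ).const_add x
    exact hf.comp_hasDerivAt_of_eq 0 (by simpa using this) (by simp)
  refine ((hasDerivAt_iff_tendsto_slope.mp hline).pow 2).congr fun ε => ?_
  simp [slope_def_field, div_pow]

theorem exists_eventually_abs_sub_le (hf : HasFDerivAt f L x) :
    ∃ C, ∀ᶠ ε : ℝ in 𝓝 0, ∀ δ : E, ‖δ‖ ≤ 1 → |f (x + ε • δ) - f x| ≤ C * |ε| := by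
  obtain ⟨C, hC⟩ := hf.isBigO_sub.bound
  obtain ⟨r, hr, hball⟩ := Metric.eventually_nhds_iff.mp hC
  refine ⟨max C 0, ?_⟩
  filter_upwards [Metric.ball_mem_nhds (0 : ℝ) hr] with ε hε δ hδ
  have hstep : ‖ε • δ‖ ≤ |ε| := by
    simpa [norm_smul] using mul_le_of_le_one_right (abs_nonneg ε) hδ
  have hdist : dist (x + ε • δ) x < r := by
    simpa using hstep.trans_lt (by simpa using hε)
  calc |f (x + ε • δ) - f x| ≤ C * ‖ε • δ‖ := by simpa using hball hdist
    _ ≤ max C 0 * |ε| := mul_le_mul (le_max_left _ _) hstep (norm_nonneg _) (le_max_right _ _)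

variable [MeasurableSpace E] [OpensMeasurableSpace E]

theorem tendsto_integral_sq_sub_div_sq (hf : HasFDerivAt f L x) (hfc : Continuous f)
    (μ : Measure E) [IsFiniteMeasure μ] (hμ : ∀ᵐ δ ∂μ, ‖δ‖ ≤ 1) :
    Tendsto (fun ε : ℝ => (∫ δ, (f (x + ε • δ) - f x) ^ 2 ∂μ) / ε ^ 2) (𝓝[≠] 0)
      (𝓝 (∫ δ, L δ ^ 2 ∂μ)) := by
  obtain ⟨C, hC⟩ := hf.exists_eventually_abs_sub_le
  simp only [← integral_div]
  refine tendsto_integral_filter_of_dominated_convergence (fun _ => C ^ 2)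
    (Eventually.of_forall fun ε => ?_) ?_ (integrable_const _)
    (Eventually.of_forall hf.tendsto_sq_sub_div_sq)
  · exact Continuous.aestronglyMeasurable (by fun_prop)
  filter_upwards [nhdsWithin_le_nhds hC, self_mem_nhdsWithin] with ε hε hε0
  filter_upwards [hμ] with δ hδ
  have hε2 : (0 : ℝ) < ε ^ 2 := by
    have : ε ≠ 0 := hε0
    positivity
  rw [Real.norm_of_nonneg (by positivity), div_le_iff₀ hε2, ← sq_abs, ← sq_abs ε, ← mul_pow]
  exact pow_le_pow_left₀ (abs_nonneg _) (hε δ hδ) 2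

end HasFDerivAt

theorem random_vulnerability_limit_general (m : ℕ)
    (μ : Measure (Fin m → ℝ))
    (hμ : μ = ((2 : ENNReal) ^ m)⁻¹ •
      volume.restrict {δ : Fin m → ℝ | ∀ i, -1 ≤ δ i ∧ δ i ≤ 1})
    (f : (Fin m → ℝ) → ℝ) (x g : Fin m → ℝ)
    (hf_cont : Continuous f)
    (L : (Fin m → ℝ) →L[ℝ] ℝ) (hf : HasFDerivAt f L x)
    (hL : ∀ δ, L δ = ∑ i, g i * δ i) :
    Tendsto (fun ε : ℝ => (∫ δ, (f (x + ε • δ) - f x) ^ 2 ∂μ) / ε ^ 2)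
      (nhdsWithin 0 (Set.Ioi 0)) (nhds ((1 / 3) * ∑ i, (g i) ^ 2)) := by
  have hcube := smul_restrict_cube_eq_cond (Fin m)
  rw [Fintype.card_fin] at hcube
  have hball : ∀ᵐ δ ∂μ, ‖δ‖ ≤ 1 := by
    rw [hμ, hcube]
    filter_upwards [ae_cond_mem (MeasurableSet.univ_pi fun _ => measurableSet_Icc)] with δ hδ
    exact (pi_norm_le_iff_of_nonneg zero_le_one).2 fun i => abs_le.2 (hδ i trivial)
  rw [hcube, cond_cube_eq_pi] at hμ
  subst hμ
  have hlim := (hf.tendsto_integral_sq_sub_div_sq hf_cont _ hball).mono_left (nhdsGT_le_nhdsNE 0)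
  convert hlim using 2
  simp_rw [hL]
  rw [integral_sum_mul_sq_pi _ (memLp_id_cond_Icc_neg_one_one 2)
    integral_id_cond_Icc_neg_one_one, integral_sq_cond_Icc_neg_one_one]
  ring

/-- The random vulnerability `ρ_rand(ε) = ∫ (f(x+εδ) - f(x))² dμ(δ)` of a
continuous function differentiable at `x` with gradient `g`, under the uniform
measure on the cube `[-1,1]^m`, satisfies `ρ_rand(ε)/ε² → (1/3)‖g‖₂²` as `ε → 0⁺`. -/
theorem random_vulnerability_limit (m : ℕ) (hm : 0 < m)
    (μ : Measure (Fin m → ℝ))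
    (hμ : μ = ((2 : ENNReal) ^ m)⁻¹ •
      volume.restrict {δ : Fin m → ℝ | ∀ i, -1 ≤ δ i ∧ δ i ≤ 1})
    (f : (Fin m → ℝ) → ℝ) (x g : Fin m → ℝ)
    (hf_cont : Continuous f)
    (L : (Fin m → ℝ) →L[ℝ] ℝ) (hf : HasFDerivAt f L x)
    (hL : ∀ δ, L δ = ∑ i, g i * δ i) :
    Tendsto (fun ε : ℝ => (∫ δ, (f (x + ε • δ) - f x) ^ 2 ∂μ) / ε ^ 2)
      (nhdsWithin 0 (Set.Ioi 0)) (nhds ((1 / 3) * ∑ i, (g i) ^ 2)) :=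
  random_vulnerability_limit_general m μ hμ f x g hf_cont L hf hL
end

section
/- Let m be a positive natural number, let f : ℝ^m → ℝ be continuous and (Fréchet) differentiable at a point x ∈ ℝ^m with gradient g = ∇f(x). Define the adversarial vulnerability ρ_adv(ε) = sup_{‖δ‖_∞ ≤ 1} (f(x + ε·δ) - f(x))^2. Then ρ_adv(ε)/ε^2 tends to ‖g‖_1^2 as ε → 0 from the right. -/
open Filter

set_option maxHeartbeats 800000 in
/-- The adversarial vulnerability `ρ_adv(ε) = sup_{‖δ‖_∞ ≤ 1} (f(x+εδ) - f(x))²`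
of a continuous function differentiable at `x` with gradient `g` satisfies
`ρ_adv(ε)/ε² → ‖g‖₁²` as `ε → 0⁺`. -/
theorem adversarial_vulnerability_limit (m : ℕ) (hm : 0 < m)
    (f : (Fin m → ℝ) → ℝ) (x g : Fin m → ℝ)
    (hf_cont : Continuous f)
    (L : (Fin m → ℝ) →L[ℝ] ℝ) (hf : HasFDerivAt f L x)
    (hL : ∀ δ, L δ = ∑ i, g i * δ i) :
    Tendsto (fun ε : ℝ =>
        sSup {t : ℝ | ∃ δ : Fin m → ℝ, (∀ i, |δ i| ≤ 1) ∧
          t = (f (x + ε • δ) - f x) ^ 2} / ε ^ 2)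
      (nhdsWithin 0 (Set.Ioi 0)) (nhds ((∑ i, |g i|) ^ 2)) := by
  set G : ℝ := ∑ i, |g i| with hGdef
  have hG0 : 0 ≤ G := Finset.sum_nonneg fun i _ => abs_nonneg _
  have hLb : ∀ δ : Fin m → ℝ, (∀ i, |δ i| ≤ 1) → |L δ| ≤ G := by
    intro δ hδ
    rw [hL]
    calc |∑ i, g i * δ i| ≤ ∑ i, |g i * δ i| := Finset.abs_sum_le_sum_abs _ _
      _ ≤ ∑ i, |g i| := Finset.sum_le_sum fun i _ => by
            rw [abs_mul]
            exact mul_le_of_le_one_right (abs_nonneg _) (hδ i)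
  set δs : Fin m → ℝ := fun i => if 0 ≤ g i then 1 else -1 with hδsdef
  have hδs1 : ∀ i, |δs i| ≤ 1 := by
    intro i; simp only [hδsdef]; split <;> simp
  have hLδs : L δs = G := by
    rw [hL]
    refine Finset.sum_congr rfl fun i _ => ?_
    simp only [hδsdef]
    split
    · rename_i h; rw [abs_of_nonneg h]; ring
    · rename_i h; rw [abs_of_neg (lt_of_not_ge h)]; ring
  rw [Metric.tendsto_nhds]
  intro η hη
  set c : ℝ := min 1 (η / (2*G+2)) with hcdef
  have hc0 : 0 < c := lt_min one_pos (div_pos hη (by linarith))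
  have hc1 : c ≤ 1 := min_le_left _ _
  have hckey : 2*G*c + c^2 < η := by
    have h2 : c ≤ η / (2*G+2) := min_le_right _ _
    have h3 : c * (2*G+2) ≤ η := (le_div_iff₀ (by linarith)).mp h2
    nlinarith [hc0.le, hG0]
  have ho := hf.isLittleO.def hc0
  rw [Metric.eventually_nhds_iff] at ho
  obtain ⟨r, hr0, hr⟩ := ho
  filter_upwards [Ioo_mem_nhdsGT_of_mem (Set.mem_Ico.mpr ⟨le_refl 0, hr0⟩)] with ε hε
  obtain ⟨hε0, hεr⟩ := hε
  have hε2 : (0:ℝ) < ε^2 := by positivity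
  have key : ∀ δ : Fin m → ℝ, (∀ i, |δ i| ≤ 1) →
      |f (x + ε • δ) - f x - L (ε • δ)| ≤ c * ε := by
    intro δ hδ
    have hnδ : ‖δ‖ ≤ 1 := by
      rw [pi_norm_le_iff_of_nonneg zero_le_one]
      intro i; rw [Real.norm_eq_abs]; exact hδ i
    have hns : ‖ε • δ‖ ≤ ε := by
      rw [norm_smul, Real.norm_eq_abs, abs_of_pos hε0]
      nlinarith [norm_nonneg δ]
    have hd : dist (x + ε • δ) x < r := by
      rw [dist_eq_norm]
      simp only [add_sub_cancel_left]
      linarith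
    have h2 := hr hd
    simp only [add_sub_cancel_left, Real.norm_eq_abs] at h2
    calc |f (x + ε • δ) - f x - L (ε • δ)| ≤ c * ‖ε • δ‖ := h2
      _ ≤ c * ε := by nlinarith [hc0.le]
  have hLs : ∀ δ : Fin m → ℝ, L (ε • δ) = ε * L δ := by
    intro δ; rw [map_smul, smul_eq_mul]
  have hub : ∀ t ∈ {t : ℝ | ∃ δ : Fin m → ℝ, (∀ i, |δ i| ≤ 1) ∧
      t = (f (x + ε • δ) - f x) ^ 2}, t ≤ ε^2 * (G+c)^2 := by
    rintro t ⟨δ, hδ, rfl⟩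
    have h1 := key δ hδ
    have h2 := hLb δ hδ
    rw [hLs] at h1
    have habs : |f (x + ε • δ) - f x| ≤ ε * (G + c) := by
      have := abs_sub_abs_le_abs_sub (f (x + ε • δ) - f x) (ε * L δ)
      have hLε : |ε * L δ| ≤ ε * G := by
        rw [abs_mul, abs_of_pos hε0]
        nlinarith
      have h3 : |f (x + ε • δ) - f x - ε * L δ| ≤ c * ε := h1
      nlinarith
    rw [abs_le] at habs
    nlinarith
  have hne : ((f (x + ε • (0:Fin m → ℝ)) - f x) ^ 2) ∈
      {t : ℝ | ∃ δ : Fin m → ℝ, (∀ i, |δ i| ≤ 1) ∧ t = (f (x + ε • δ) - f x) ^ 2} :=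
    ⟨0, fun i => by simp, rfl⟩
  have hbdd : BddAbove {t : ℝ | ∃ δ : Fin m → ℝ, (∀ i, |δ i| ≤ 1) ∧
      t = (f (x + ε • δ) - f x) ^ 2} := ⟨ε^2 * (G+c)^2, hub⟩
  have hS_le : sSup {t : ℝ | ∃ δ : Fin m → ℝ, (∀ i, |δ i| ≤ 1) ∧
      t = (f (x + ε • δ) - f x) ^ 2} ≤ ε^2 * (G+c)^2 := csSup_le ⟨_, hne⟩ hub
  have hmem : ((f (x + ε • δs) - f x) ^ 2) ∈
      {t : ℝ | ∃ δ : Fin m → ℝ, (∀ i, |δ i| ≤ 1) ∧ t = (f (x + ε • δ) - f x) ^ 2} :=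
    ⟨δs, hδs1, rfl⟩
  have hS_ge : (f (x + ε • δs) - f x) ^ 2 ≤ sSup {t : ℝ | ∃ δ : Fin m → ℝ,
      (∀ i, |δ i| ≤ 1) ∧ t = (f (x + ε • δ) - f x) ^ 2} := le_csSup hbdd hmem
  have hks := key δs hδs1
  rw [hLs, hLδs] at hks
  rw [abs_le] at hks
  set S : ℝ := sSup {t : ℝ | ∃ δ : Fin m → ℝ, (∀ i, |δ i| ≤ 1) ∧
      t = (f (x + ε • δ) - f x) ^ 2} with hSdef
  clear_value S
  clear hSdef
  rw [Real.dist_eq, abs_lt]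
  have hSnn : 0 ≤ S := le_trans (sq_nonneg _) hS_ge
  constructor
  · -- G² - η < S/ε²
    by_cases hGc : c ≤ G
    · have hf1 : ε * (G - c) ≤ f (x + ε • δs) - f x := by nlinarith
      have hf0 : 0 ≤ ε * (G - c) := by nlinarith
      have hsq : ε^2 * (G - c)^2 ≤ (f (x + ε • δs) - f x)^2 := by nlinarith
      have : (G - c)^2 ≤ S / ε^2 := by
        rw [le_div_iff₀ hε2]; nlinarith
      nlinarith
    · push_neg at hGc
      have : 0 ≤ S / ε^2 := div_nonneg hSnn hε2.le
      nlinarith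
  · have : S / ε^2 ≤ (G + c)^2 := by
      rw [div_le_iff₀ hε2]; nlinarith
    nlinarith
end

section
/- (Theorem 4.3, rigorous small-ε form.) Let m be a positive natural number, let μ be the uniform probability measure on the cube [-1,1]^m in ℝ^m, and let f : ℝ^m → ℝ be continuous and (Fréchet) differentiable at x ∈ ℝ^m with nonzero gradient g = ∇f(x). Define ρ_rand(ε) = ∫ (f(x+ε·δ) - f(x))^2 dμ(δ) and ρ_adv(ε) = sup_{‖δ‖_∞ ≤ 1} (f(x+ε·δ) - f(x))^2. Then the ratio ρ_adv(ε)/ρ_rand(ε) tends to 3·‖g‖_1^2/‖g‖_2^2 as ε → 0 from the right, and this limit L satisfies 3 ≤ L ≤ 3·‖g‖_0, where ‖g‖_0 is the number of nonzero coordinates of g. -/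
/-!
Write `f (x + ε • δ) - f x = ε * q ε δ`. Differentiability at `x` gives `q ε → L`
uniformly on the unit cube as `ε → 0`, so the factor `ε²` cancels in the ratio, and the supremum
and the mean of `(q ε)²` converge to those of `(L δ)²`. The supremum of `(∑ i, g i * δ i)²` over
the cube is `‖g‖₁²`, attained at `δ = sign g`. Under the uniform measure the coordinates are
independent and centred with second moment `1/3`, so the mean is `‖g‖₂² / 3`. The bounds on the
limit are `‖g‖₂ ≤ ‖g‖₁` and Cauchy–Schwarz on the support of `g`.
-/

open MeasureTheory Filter Topology Metric
open scoped ENNReal Pointwise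

theorem HasFDerivAt.tendstoUniformlyOn_slope {𝕜 E F : Type*} [NontriviallyNormedField 𝕜]
    [NormedAddCommGroup E] [NormedSpace 𝕜 E] [NormedAddCommGroup F] [NormedSpace 𝕜 F]
    {f : E → F} {f' : E →L[𝕜] F} {x : E} (hf : HasFDerivAt f f' x) {s : Set E}
    (hs : Bornology.IsBounded s) :
    TendstoUniformlyOn (fun (t : 𝕜) v => t⁻¹ • (f (x + t • v) - f x)) (fun v => f' v)
      (𝓝[≠] 0) s := by
  obtain ⟨R, hR, hsR⟩ := hs.subset_closedBall_lt 0 0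
  rw [Metric.tendstoUniformlyOn_iff]
  intro η hη
  obtain ⟨r, hr, hsmall⟩ := Metric.eventually_nhds_iff.mp
    ((hasFDerivAt_iff_isLittleO_nhds_zero.mp hf).def (c := η / (2 * R)) (by positivity))
  filter_upwards [self_mem_nhdsWithin,
    nhdsWithin_le_nhds (ball_mem_nhds (0 : 𝕜) (div_pos hr hR))] with t ht0 htr v hv
  have ht : 0 < ‖t‖ := norm_pos_iff.mpr ht0
  have htv : ‖t • v‖ ≤ ‖t‖ * R := by
    rw [norm_smul]; gcongr; exact mem_closedBall_zero_iff.mp (hsR hv)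
  have hlin := hsmall (y := t • v) (by
    rw [dist_zero_right]
    calc ‖t • v‖ ≤ ‖t‖ * R := htv
      _ < r / R * R := by gcongr; simpa using htr
      _ = r := div_mul_cancel₀ r hR.ne')
  calc dist (f' v) (t⁻¹ • (f (x + t • v) - f x))
      = ‖t‖⁻¹ * ‖f (x + t • v) - f x - f' (t • v)‖ := by
        rw [dist_comm, dist_eq_norm, map_smul, ← norm_inv, ← norm_smul, smul_sub, smul_sub,
          inv_smul_smul₀ ht0, smul_sub]
    _ ≤ ‖t‖⁻¹ * (η / (2 * R) * (‖t‖ * R)) := by gcongr; exact hlin.trans (by gcongr)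
    _ = η / 2 := by field_simp
    _ < η := half_lt_self hη

section UniformLimits

variable {ι α : Type*} {l : Filter ι} {s : Set α} {F : ι → α → ℝ} {f : α → ℝ}

theorem TendstoUniformlyOn.sq (h : TendstoUniformlyOn F f l s) {C : ℝ}
    (hC : ∀ a ∈ s, |f a| ≤ C) :
    TendstoUniformlyOn (fun i a => F i a ^ 2) (fun a => f a ^ 2) l s := by
  rw [Metric.tendstoUniformlyOn_iff] at h ⊢
  intro η hη
  filter_upwards [h (min 1 (η / (1 + 2 * |C|))) (by positivity)] with i hi a ha
  have hd := hi a ha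
  rw [Real.dist_eq] at hd ⊢
  have hd1 : |f a - F i a| < 1 := hd.trans_le (min_le_left _ _)
  have hdη : |f a - F i a| * (1 + 2 * |C|) < η :=
    (lt_div_iff₀ (by positivity)).mp (hd.trans_le (min_le_right _ _))
  have hfC : |f a| ≤ |C| := (hC a ha).trans (le_abs_self C)
  calc |f a ^ 2 - F i a ^ 2| = |f a - F i a| * |2 * f a - (f a - F i a)| := by
        rw [← abs_mul]; ring_nf
    _ ≤ |f a - F i a| * (2 * |C| + 1) := by
        gcongr
        calc |2 * f a - (f a - F i a)| ≤ |2 * f a| + |f a - F i a| := abs_sub _ _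
          _ ≤ 2 * |C| + 1 := by rw [abs_mul, abs_two]; linarith
    _ < η := by linarith

theorem TendstoUniformlyOn.tendsto_sSup_image (h : TendstoUniformlyOn F f l s)
    (hs : s.Nonempty) (hf : BddAbove (f '' s)) :
    Tendsto (fun i => sSup (F i '' s)) l (𝓝 (sSup (f '' s))) := by
  rw [Metric.tendsto_nhds]
  intro η hη
  filter_upwards [Metric.tendstoUniformlyOn_iff.mp h (η / 2) (half_pos hη)] with i hi
  have hclose : ∀ a ∈ s, |f a - F i a| < η / 2 := fun a ha => by
    simpa only [Real.dist_eq] using hi a ha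
  have hF_le : ∀ a ∈ s, F i a ≤ sSup (f '' s) + η / 2 := fun a ha => by
    linarith [(abs_lt.mp (hclose a ha)).1, le_csSup hf (Set.mem_image_of_mem f ha)]
  have hF_bdd : BddAbove (F i '' s) := ⟨_, Set.forall_mem_image.mpr hF_le⟩
  have hf_le : ∀ a ∈ s, f a ≤ sSup (F i '' s) + η / 2 := fun a ha => by
    linarith [(abs_lt.mp (hclose a ha)).2, le_csSup hF_bdd (Set.mem_image_of_mem (F i) ha)]
  have hsupF := csSup_le (hs.image _) (Set.forall_mem_image.mpr hF_le)
  have hsupf := csSup_le (hs.image _) (Set.forall_mem_image.mpr hf_le)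
  rw [Real.dist_eq, abs_lt]
  constructor <;> linarith

theorem TendstoUniformlyOn.tendsto_integral [MeasurableSpace α] {μ : Measure α}
    [IsFiniteMeasure μ] [l.IsCountablyGenerated] (h : TendstoUniformlyOn F f l s)
    (hF : ∀ᶠ i in l, AEStronglyMeasurable (F i) μ) (hs : ∀ᵐ a ∂μ, a ∈ s) {C : ℝ}
    (hC : ∀ a ∈ s, |f a| ≤ C) :
    Tendsto (fun i => ∫ a, F i a ∂μ) l (𝓝 (∫ a, f a ∂μ)) := by
  refine tendsto_integral_filter_of_dominated_convergence (fun _ => C + 1) hF ?_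
    (integrable_const _) ?_
  · filter_upwards [(uniformContinuous_norm.comp_tendstoUniformlyOn h).eventually_forall_le
      (lt_add_one C) (by simpa using hC)] with i hi
    filter_upwards [hs] with a ha using hi a ha
  · filter_upwards [hs] with a ha using h.tendsto_at ha

end UniformLimits

theorem sSup_image_const_mul_div_integral_const_mul {α : Type*} [MeasurableSpace α]
    {μ : Measure α} {s : Set α} {h : α → ℝ} {c : ℝ} (hc : 0 < c) :
    sSup ((fun a => c * h a) '' s) / ∫ a, c * h a ∂μ = sSup (h '' s) / ∫ a, h a ∂μ := by
  have himage : (fun a => c * h a) '' s = c • (h '' s) := by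
    rw [← Set.image_smul, Set.image_image]; rfl
  rw [himage, Real.sSup_smul_of_nonneg hc.le, integral_const_mul, smul_eq_mul,
    mul_div_mul_left _ _ hc.ne']

section LinearForm

variable {ι : Type*} [Fintype ι]

theorem setOf_exists_abs_le_one_eq_image (h : (ι → ℝ) → ℝ) :
    {t | ∃ δ : ι → ℝ, (∀ i, |δ i| ≤ 1) ∧ t = h δ} = h '' closedBall 0 1 := by
  ext t
  simp only [Set.mem_image, mem_closedBall_zero_iff, pi_norm_le_iff_of_nonneg zero_le_one,
    Real.norm_eq_abs, eq_comm (a := t), Set.mem_ofPred_eq]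

theorem abs_sum_mul_le_sum_abs {g δ : ι → ℝ} (hδ : δ ∈ closedBall 0 1) :
    |∑ i, g i * δ i| ≤ ∑ i, |g i| := by
  rw [mem_closedBall_zero_iff, pi_norm_le_iff_of_nonneg zero_le_one] at hδ
  refine (Finset.abs_sum_le_sum_abs _ _).trans (Finset.sum_le_sum fun i _ => ?_)
  rw [abs_mul]
  exact mul_le_of_le_one_right (abs_nonneg _) (by simpa using hδ i)

theorem isGreatest_sq_sum_mul_image_closedBall (g : ι → ℝ) :
    IsGreatest ((fun δ : ι → ℝ => (∑ i, g i * δ i) ^ 2) '' closedBall 0 1)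
      ((∑ i, |g i|) ^ 2) := by
  refine ⟨⟨fun i => SignType.sign (g i), ?_, by simp only [self_mul_sign]⟩, ?_⟩
  · rw [mem_closedBall_zero_iff, pi_norm_le_iff_of_nonneg zero_le_one]
    intro i
    rcases lt_trichotomy (g i) 0 with h | h | h <;> simp [h]
  · rintro _ ⟨δ, hδ, rfl⟩
    exact sq_le_sq' (abs_le.mp (abs_sum_mul_le_sum_abs hδ)).1
      (abs_le.mp (abs_sum_mul_le_sum_abs hδ)).2

theorem sum_sq_pos_of_ne_zero {g : ι → ℝ} (hg : g ≠ 0) : 0 < ∑ i, g i ^ 2 := by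
  obtain ⟨i, hi⟩ := Function.ne_iff.mp hg
  exact Finset.sum_pos' (fun j _ => sq_nonneg (g j))
    ⟨i, Finset.mem_univ i, pow_two_pos_of_ne_zero hi⟩

theorem sum_sq_le_sq_sum_abs (g : ι → ℝ) : ∑ i, g i ^ 2 ≤ (∑ i, |g i|) ^ 2 := by
  simpa only [sq_abs] using
    Finset.sum_sq_le_sq_sum_of_nonneg (s := Finset.univ) (fun i _ => abs_nonneg (g i))

theorem sq_sum_abs_le_card_support_mul_sum_sq [DecidableEq ι] (g : ι → ℝ) :
    (∑ i, |g i|) ^ 2 ≤ (Finset.univ.filter (fun i => g i ≠ 0)).card * ∑ i, g i ^ 2 := by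
  have hsupp : ∀ h : ι → ℝ, (∀ i, g i = 0 → h i = 0) →
      ∑ i ∈ Finset.univ.filter (fun i => g i ≠ 0), h i = ∑ i, h i := fun h hh =>
    Finset.sum_filter_of_ne fun i _ hi => fun hg => hi (hh i hg)
  rw [← hsupp _ (fun i hi => by simp [hi]), ← hsupp _ (fun i hi => by simp [hi])]
  simpa only [sq_abs] using
    sq_sum_le_card_mul_sum_sq (s := Finset.univ.filter (fun i => g i ≠ 0)) (f := fun i => |g i|)

end LinearForm

section Moments

variable {ι : Type*} [Fintype ι] {ν : Measure ℝ} [IsProbabilityMeasure ν]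

theorem integral_mul_eval_pi [DecidableEq ι] (hν : ∫ t, t ∂ν = 0) (i j : ι) :
    ∫ δ, δ i * δ j ∂(Measure.pi fun _ => ν) = if i = j then ∫ t, t ^ 2 ∂ν else 0 := by
  split_ifs with hij
  · subst hij
    simp only [← sq]
    exact integral_comp_eval (μ := fun _ => ν) (f := fun t => t ^ 2) (by fun_prop)
  · have hind : ProbabilityTheory.IndepFun (fun δ : ι → ℝ => δ i) (fun δ => δ j)
        (Measure.pi fun _ => ν) :=
      (ProbabilityTheory.iIndepFun_pi (X := fun _ => id) fun _ => aemeasurable_id).indepFun hij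
    rw [hind.integral_fun_mul_eq_mul_integral (continuous_apply i).aestronglyMeasurable
      (continuous_apply j).aestronglyMeasurable]
    simp [integral_eval, hν]

theorem integral_sq_sum_mul_pi (hν : ∫ t, t ∂ν = 0) (hν2 : MemLp id 2 ν) (g : ι → ℝ) :
    ∫ δ, (∑ i, g i * δ i) ^ 2 ∂(Measure.pi fun _ => ν) = (∑ i, g i ^ 2) * ∫ t, t ^ 2 ∂ν := by
  classical
  have hint : ∀ i j, Integrable (fun δ : ι → ℝ => g i * g j * (δ i * δ j))
      (Measure.pi fun _ => ν) := fun i j =>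
    have hmem : ∀ k, MemLp (fun δ : ι → ℝ => δ k) 2 (Measure.pi fun _ => ν) := fun k =>
      hν2.comp_measurePreserving (measurePreserving_eval _ k)
    ((hmem i).integrable_mul (hmem j)).const_mul _
  have hexpand : ∀ δ : ι → ℝ,
      (∑ i, g i * δ i) ^ 2 = ∑ i, ∑ j, g i * g j * (δ i * δ j) := fun δ => by
    rw [sq, Finset.sum_mul_sum]
    exact Finset.sum_congr rfl fun i _ => Finset.sum_congr rfl fun j _ => by ring
  simp_rw [hexpand]
  rw [integral_finsetSum _ fun i _ => integrable_finsetSum _ fun j _ => hint i j,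
    Finset.sum_mul]
  refine Finset.sum_congr rfl fun i _ => ?_
  rw [integral_finsetSum _ fun j _ => hint i j]
  simp_rw [integral_const_mul, integral_mul_eval_pi hν, mul_ite, mul_zero,
    Finset.sum_ite_eq, Finset.mem_univ, if_true, sq]

end Moments

noncomputable def uniformNegOneOne : Measure ℝ :=
  (2 : ℝ≥0∞)⁻¹ • volume.restrict (Set.Icc (-1) 1)

namespace uniformNegOneOne

instance : IsProbabilityMeasure uniformNegOneOne := by
  constructor
  simp only [uniformNegOneOne, Measure.smul_apply, Measure.restrict_apply_univ, Real.volume_Icc]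
  norm_num [ENNReal.inv_mul_cancel]

theorem ae_abs_le_one : ∀ᵐ t ∂uniformNegOneOne, |t| ≤ 1 := by
  refine Measure.ae_smul_measure ?_ _
  filter_upwards [ae_restrict_mem measurableSet_Icc] with t ht using abs_le.mpr ht

theorem ae_mem_closedBall_pi {ι : Type*} [Fintype ι] :
    ∀ᵐ δ ∂(Measure.pi fun (_ : ι) => uniformNegOneOne), δ ∈ closedBall 0 1 := by
  simp only [mem_closedBall_zero_iff, pi_norm_le_iff_of_nonneg zero_le_one, Real.norm_eq_abs]
  exact ae_all_iff.mpr fun i =>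
    (Measure.tendsto_eval_ae_ae (μ := fun _ => uniformNegOneOne) (i := i)).eventually
      ae_abs_le_one

theorem memLp_id : MemLp id 2 uniformNegOneOne :=
  MemLp.of_bound aestronglyMeasurable_id 1 ae_abs_le_one

theorem integral_pow (n : ℕ) :
    ∫ t, t ^ n ∂uniformNegOneOne = (1 - (-1) ^ (n + 1)) / (2 * (n + 1)) := by
  rw [uniformNegOneOne, integral_smul_measure, integral_Icc_eq_integral_Ioc,
    ← intervalIntegral.integral_of_le (by norm_num), _root_.integral_pow]
  simp only [ENNReal.toReal_inv, ENNReal.toReal_ofNat, one_pow, smul_eq_mul]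
  field_simp

theorem integral_id : ∫ t, t ∂uniformNegOneOne = 0 := by
  simpa using integral_pow 1

theorem integral_sq : ∫ t, t ^ 2 ∂uniformNegOneOne = 1 / 3 := by
  rw [integral_pow]; norm_num

end uniformNegOneOne

theorem normalized_volume_restrict_cube_eq_pi (ι : Type*) [Fintype ι] :
    ((2 : ℝ≥0∞) ^ Fintype.card ι)⁻¹ •
        volume.restrict {δ : ι → ℝ | ∀ i, -1 ≤ δ i ∧ δ i ≤ 1} =
      Measure.pi fun _ => uniformNegOneOne := by
  have hcube : {δ : ι → ℝ | ∀ i, -1 ≤ δ i ∧ δ i ≤ 1} = Set.univ.pi fun _ => Set.Icc (-1) 1 := by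
    ext δ; simp only [Set.mem_ofPred_eq, Set.mem_pi, Set.mem_univ, Set.mem_Icc, forall_const]
  refine (Measure.pi_eq fun s hs => ?_).symm
  rw [hcube, Measure.smul_apply, Measure.restrict_apply (MeasurableSet.univ_pi hs),
    ← Set.pi_inter_distrib, volume_pi_pi]
  simp [uniformNegOneOne, Measure.restrict_apply (hs _), Finset.prod_mul_distrib, ENNReal.inv_pow]

theorem adv_rand_vulnerability_ratio_general (m : ℕ)
    (μ : Measure (Fin m → ℝ))
    (hμ : μ = ((2 : ENNReal) ^ m)⁻¹ •
      volume.restrict {δ : Fin m → ℝ | ∀ i, -1 ≤ δ i ∧ δ i ≤ 1})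
    (f : (Fin m → ℝ) → ℝ) (x g : Fin m → ℝ)
    (hf_cont : Continuous f)
    (L : (Fin m → ℝ) →L[ℝ] ℝ) (hf : HasFDerivAt f L x)
    (hL : ∀ δ, L δ = ∑ i, g i * δ i)
    (hg : g ≠ 0) :
    Tendsto (fun ε : ℝ =>
        sSup {t : ℝ | ∃ δ : Fin m → ℝ, (∀ i, |δ i| ≤ 1) ∧
            t = (f (x + ε • δ) - f x) ^ 2} /
          (∫ δ, (f (x + ε • δ) - f x) ^ 2 ∂μ))
      (nhdsWithin 0 (Set.Ioi 0))
      (nhds (3 * (∑ i, |g i|) ^ 2 / ∑ i, (g i) ^ 2)) ∧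
    3 ≤ 3 * (∑ i, |g i|) ^ 2 / ∑ i, (g i) ^ 2 ∧
    3 * (∑ i, |g i|) ^ 2 / ∑ i, (g i) ^ 2 ≤
      3 * ((Finset.univ.filter (fun i => g i ≠ 0)).card : ℝ) := by
  classical
  obtain rfl : μ = Measure.pi fun _ => uniformNegOneOne := by
    rw [hμ, ← normalized_volume_restrict_cube_eq_pi, Fintype.card_fin]
  have hB := sum_sq_pos_of_ne_zero hg
  have hmax := isGreatest_sq_sum_mul_image_closedBall g
  have hslope := hf.tendstoUniformlyOn_slope (isBounded_closedBall (x := 0) (r := 1))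
  simp only [hL] at hslope
  replace hslope := hslope.sq fun δ hδ => abs_sum_mul_le_sum_abs hδ
  have hadv := hslope.tendsto_sSup_image (nonempty_closedBall.mpr zero_le_one) hmax.bddAbove
  have hrand := hslope.tendsto_integral (Eventually.of_forall fun ε => by fun_prop)
    uniformNegOneOne.ae_mem_closedBall_pi fun δ hδ => by
      rw [abs_sq]; exact hmax.2 ⟨δ, hδ, rfl⟩
  rw [hmax.csSup_eq] at hadv
  rw [integral_sq_sum_mul_pi uniformNegOneOne.integral_id uniformNegOneOne.memLp_id,
    uniformNegOneOne.integral_sq] at hrand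
  refine ⟨?_, ?_, ?_⟩
  · have hlim : (∑ i, |g i|) ^ 2 / ((∑ i, g i ^ 2) * (1 / 3)) =
        3 * (∑ i, |g i|) ^ 2 / ∑ i, g i ^ 2 := by
      field_simp
    refine hlim ▸ ((hadv.div hrand (by positivity)).mono_left (nhdsGT_le_nhdsNE 0)).congr'
      (eventually_nhdsWithin_of_forall fun ε (hε : 0 < ε) => ?_)
    have hscale : ∀ δ, ε ^ 2 * (ε⁻¹ • (f (x + ε • δ) - f x)) ^ 2 = (f (x + ε • δ) - f x) ^ 2 :=
      fun δ => by rw [smul_eq_mul]; field_simp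
    simp only [Pi.div_apply]
    rw [← sSup_image_const_mul_div_integral_const_mul (pow_pos hε 2)]
    simp only [hscale, setOf_exists_abs_le_one_eq_image]
  · rw [le_div_iff₀ hB]
    linarith [sum_sq_le_sq_sum_abs g]
  · rw [div_le_iff₀ hB]
    linarith [sq_sum_abs_le_card_support_mul_sum_sq g]

/-- Theorem 4.3 (rigorous small-ε form): the ratio of adversarial to random
vulnerability tends to `3‖g‖₁²/‖g‖₂²` as `ε → 0⁺`, a limit `L` satisfying
`3 ≤ L ≤ 3‖g‖₀`. -/
theorem adv_rand_vulnerability_ratio (m : ℕ) (hm : 0 < m)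
    (μ : Measure (Fin m → ℝ))
    (hμ : μ = ((2 : ENNReal) ^ m)⁻¹ •
      volume.restrict {δ : Fin m → ℝ | ∀ i, -1 ≤ δ i ∧ δ i ≤ 1})
    (f : (Fin m → ℝ) → ℝ) (x g : Fin m → ℝ)
    (hf_cont : Continuous f)
    (L : (Fin m → ℝ) →L[ℝ] ℝ) (hf : HasFDerivAt f L x)
    (hL : ∀ δ, L δ = ∑ i, g i * δ i)
    (hg : g ≠ 0) :
    Tendsto (fun ε : ℝ =>
        sSup {t : ℝ | ∃ δ : Fin m → ℝ, (∀ i, |δ i| ≤ 1) ∧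
            t = (f (x + ε • δ) - f x) ^ 2} /
          (∫ δ, (f (x + ε • δ) - f x) ^ 2 ∂μ))
      (nhdsWithin 0 (Set.Ioi 0))
      (nhds (3 * (∑ i, |g i|) ^ 2 / ∑ i, (g i) ^ 2)) ∧
    3 ≤ 3 * (∑ i, |g i|) ^ 2 / ∑ i, (g i) ^ 2 ∧
    3 * (∑ i, |g i|) ^ 2 / ∑ i, (g i) ^ 2 ≤
      3 * ((Finset.univ.filter (fun i => g i ≠ 0)).card : ℝ) :=
  adv_rand_vulnerability_ratio_general m μ hμ f x g hf_cont L hf hL hg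
end
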